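/- Under the unit-root assumption, the following are equivalent: (i) N_{−k} = 0 for every k ≥ 2 (i.e. (I − zA₁)^{−1} has a simple pole at z = 1); (ii) ran P = ker(I − A₁); (iii) P is a bounded idempotent operator with range equal to ker(I − A₁) and kernel equal to ran(I − A₁); (iv) B = ran(I − A₁) ⊕ ker(I − A₁) (internal direct sum; in particular ran(I − A₁) is closed). Moreover, under any of these equivalent conditions, N_{−1} = P. -/

import Mathlib

/-!
The Laurent coefficients satisfy `(1 - A) N_j - A N_{j-1} = -δ_{j0}` and commute with `A`:
compare the integrands, using `1 - zA = (1 - A) - (z - 1) A`. If `N_{-2} = 0` this gives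
`(1 - A) N_{-1} = 0`, hence `N_{-1} = A N_{-1} = P`; the relation at `j = 0` shows that `P`
fixes `ker (1 - A)` and that `x = (1 - A) (-N_0 x)` whenever `P x = 0`. This proves
(i) ⇒ (ii) ⇒ (iii), and (iii) ⇒ (iv) holds for every bounded idempotent.

For (iv) ⇒ (i) let `Q` be the bounded projection onto `ker (1 - A)` along `ran (1 - A)`. Then
`1 - A + Q` is invertible, and near `z = 1`
`(1 - zA)⁻¹ = (1 - z)⁻¹ Q + (1 - zA + Q)⁻¹ (1 - Q)`,
whose second summand is holomorphic, so the pole at `1` is simple.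
-/

/-- Laurent coefficients at `z = 1` of the inverse pencil `(I - z A₁)⁻¹`:
`N j = -(1/(2πi)) ∮_{|z-1|=r} (I - z A₁)⁻¹ (z-1)^{-j-1} dz`. -/
noncomputable def laurentN {B : Type*} [NormedAddCommGroup B] [NormedSpace ℂ B]
    (A₁ : B →L[ℂ] B) (r : ℝ) (j : ℤ) : B →L[ℂ] B :=
  (-(2 * (Real.pi : ℂ) * Complex.I)⁻¹) •
    circleIntegral (fun z => (z - 1) ^ (-j - 1) • Ring.inverse (1 - z • A₁)) 1 r

open Complex Metric Set

theorem Commute.ringInverse_right {M₀ : Type*} [MonoidWithZero M₀] {a b : M₀}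
    (h : Commute a b) : Commute a (Ring.inverse b) := by
  by_cases hb : IsUnit b
  · obtain ⟨u, rfl⟩ := hb
    rw [Ring.inverse_unit]
    exact h.units_inv_right
  · rw [Ring.inverse_non_unit b hb]
    exact Commute.zero_right a

theorem Ring.inverse_one_sub_smul_eq {𝕜 R : Type*} [Field 𝕜] [Ring R] [Algebra 𝕜 R] {a q : R}
    (hq : IsIdempotentElem q) (haq : a * q = q) (hqa : q * a = q) {z : 𝕜} (hz : z ≠ 1)
    (hu : IsUnit (1 - z • a + q)) :
    Ring.inverse (1 - z • a) = (1 - z)⁻¹ • q + Ring.inverse (1 - z • a + q) * (1 - q) := by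
  set w := Ring.inverse (1 - z • a + q)
  have hcomm_q : Commute (1 - z • a) q :=
    (Commute.one_left q).sub_left (Commute.smul_left (haq.trans hqa.symm) z)
  have hcomm_w : Commute (1 - z • a) w := ((Commute.refl _).add_right hcomm_q).ringInverse_right
  have hq_w : Commute q w := (hcomm_q.symm.add_right (Commute.refl q)).ringInverse_right
  have hcomm : Commute (1 - z • a) ((1 - z)⁻¹ • q + w * (1 - q)) :=
    (hcomm_q.smul_right _).add_right (hcomm_w.mul_right ((Commute.one_right _).sub_right hcomm_q))
  have hmul : (1 - z • a) * ((1 - z)⁻¹ • q + w * (1 - q)) = 1 := by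
    have h_range : (1 - z • a) * q = (1 - z) • q := by
      rw [sub_mul, one_mul, smul_mul_assoc, haq, sub_smul, one_smul]
    have h_compl : (1 - z • a) * (w * (1 - q)) = 1 - q := by
      rw [show 1 - z • a = (1 - z • a + q) - q by abel, sub_mul, ← mul_assoc,
        Ring.mul_inverse_cancel _ hu, one_mul, ← mul_assoc, hq_w.eq, mul_assoc,
        hq.mul_one_sub_self, mul_zero, sub_zero]
    rw [mul_add, mul_smul_comm, h_range, smul_smul, inv_mul_cancel₀ (sub_ne_zero.mpr hz.symm),
      one_smul, h_compl, add_sub_cancel]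
  exact Ring.inverse_unit ⟨_, _, hmul, hcomm.eq ▸ hmul⟩

theorem LinearMap.bijective_add_projection_ker {R E : Type*} [Ring R] [AddCommGroup E]
    [Module R E] (f : E →ₗ[R] E) (h : IsCompl (ker f) (range f)) :
    Function.Bijective (f + (ker f).projection (range f) h) := by
  set Q := (ker f).projection (range f) h
  have hfQ : ∀ x, f (Q x) = 0 := fun x => Submodule.projection_apply_mem h x
  have hQQ : ∀ x, Q (Q x) = Q x :=
    fun x => Submodule.projection_apply_of_mem_left h (Submodule.projection_apply_mem h x)
  constructor
  · rw [injective_iff_map_eq_zero]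
    intro x hx
    have hfx : f x = -Q x := eq_neg_of_add_eq_zero_left hx
    have hfx0 : f x = 0 := Submodule.disjoint_def.mp h.disjoint (f x)
      (by rw [mem_ker, hfx, map_neg, hfQ, neg_zero]) (mem_range_self f x)
    rw [hfx0, eq_comm, neg_eq_zero] at hfx
    rw [← Submodule.projection_apply_of_mem_left h hfx0, hfx]
  · intro y
    obtain ⟨u, hu⟩ : (range f).projection (ker f) h.symm y ∈ range f :=
      Submodule.projection_apply_mem h.symm y
    refine ⟨u - Q u + Q y, ?_⟩
    simp only [add_apply, map_add, map_sub, hfQ, hQQ, hu, zero_add]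
    rw [add_sub_cancel_right, add_comm]
    exact Submodule.projection_add_projection_eq_self h y

section PoleAlgebra

variable {R M : Type*} [Ring R] [AddCommGroup M] [Module R M] {A N₀ N₁ : Module.End R M}

theorem mul_apply_eq_self_of_mem_ker_one_sub (hN₀ : Commute A N₀) (hN₁ : Commute A N₁)
    (h : (1 - A) * N₀ - A * N₁ = -1) {x : M} (hx : x ∈ LinearMap.ker (1 - A)) :
    (N₁ * A) x = x := by
  have hx' : (1 - A) x = 0 := hx
  rw [((Commute.one_left N₀).sub_left hN₀).eq, hN₁.eq] at h
  have hx_eq := LinearMap.congr_fun h x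
  simp only [LinearMap.sub_apply, Module.End.mul_apply, hx', map_zero, zero_sub,
    LinearMap.neg_apply, Module.End.one_apply, neg_inj] at hx_eq
  rwa [Module.End.mul_apply]

theorem range_mul_eq_ker_one_sub (hN₀ : Commute A N₀) (hN₁ : Commute A N₁)
    (h : (1 - A) * N₀ - A * N₁ = -1) (hpole : (1 - A) * N₁ = 0) :
    LinearMap.range (N₁ * A) = LinearMap.ker (1 - A) := by
  refine le_antisymm (LinearMap.range_le_ker_iff.mpr ?_) fun x hx => ?_
  · rw [← Module.End.mul_eq_comp, ← mul_assoc, hpole, zero_mul]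
  · exact ⟨x, mul_apply_eq_self_of_mem_ker_one_sub hN₀ hN₁ h hx⟩

theorem isIdempotentElem_mul_of_range_eq_ker (hN₀ : Commute A N₀) (hN₁ : Commute A N₁)
    (h : (1 - A) * N₀ - A * N₁ = -1) (hrange : LinearMap.range (N₁ * A) = LinearMap.ker (1 - A)) :
    IsIdempotentElem (N₁ * A) :=
  LinearMap.ext fun x => mul_apply_eq_self_of_mem_ker_one_sub hN₀ hN₁ h
    (hrange ▸ LinearMap.mem_range_self (N₁ * A) x)

theorem ker_mul_eq_range_one_sub_of_range_eq_ker (hN₁ : Commute A N₁)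
    (h : (1 - A) * N₀ - A * N₁ = -1) (hrange : LinearMap.range (N₁ * A) = LinearMap.ker (1 - A)) :
    LinearMap.ker (N₁ * A) = LinearMap.range (1 - A) := by
  refine le_antisymm ?_ (LinearMap.range_le_ker_iff.mpr ?_)
  · intro x hx
    refine ⟨-N₀ x, ?_⟩
    rw [hN₁.eq] at h
    have hx_eq := LinearMap.congr_fun h x
    rw [LinearMap.sub_apply, show (N₁ * A) x = 0 from hx, sub_zero, Module.End.mul_apply]
      at hx_eq
    rw [map_neg, hx_eq, LinearMap.neg_apply, Module.End.one_apply, neg_neg]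
  · have hcomm : Commute (N₁ * A) (1 - A) :=
      (Commute.one_right _).sub_right (hN₁.symm.mul_left (Commute.refl A))
    rw [← Module.End.mul_eq_comp, hcomm.eq, Module.End.mul_eq_comp]
    exact LinearMap.range_le_ker_iff.mp hrange.le

end PoleAlgebra

theorem ContinuousLinearMap.circleIntegral_comp_comm {E F : Type*} [NormedAddCommGroup E]
    [NormedSpace ℂ E] [CompleteSpace E] [NormedAddCommGroup F] [NormedSpace ℂ F] [CompleteSpace F]
    (L : E →L[ℂ] F) {f : ℂ → E} {c : ℂ} {R : ℝ} (hf : CircleIntegrable f c R) :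
    ∮ z in C(c, R), L (f z) = L (∮ z in C(c, R), f z) := by
  simp only [circleIntegral, ← map_smul]
  exact L.intervalIntegral_comp_comm ((circleIntegrable_iff R).mp hf)

theorem differentiableAt_zpow_smul_mul_inverse_one_sub_smul {𝓐 : Type*} [NormedRing 𝓐]
    [NormedAlgebra ℂ 𝓐] [HasSummableGeomSeries 𝓐] (n : ℤ) (c a : 𝓐) {z : ℂ} (hz : z ≠ 1)
    (hu : IsUnit (1 - z • a)) :
    DifferentiableAt ℂ (fun w : ℂ => (w - 1) ^ n • (c * Ring.inverse (1 - w • a))) z := by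
  have hpow : DifferentiableAt ℂ (fun w : ℂ => (w - 1) ^ n) z :=
    (differentiableAt_zpow.mpr (Or.inl (sub_ne_zero.mpr hz))).comp z
      (differentiableAt_id.sub_const 1)
  have hinverse : DifferentiableAt ℂ (fun w : ℂ => Ring.inverse (1 - w • a)) z :=
    ((differentiableAt_const 1).sub (differentiableAt_id.smul_const a)).inverse hu
  exact hpow.smul ((differentiableAt_const c).mul hinverse)

theorem norm_lt_one_add_of_mem_closedBall {s η : ℝ} (hs : s < η) {z : ℂ}
    (hz : z ∈ closedBall (1 : ℂ) s) : ‖z‖ < 1 + η := by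
  rw [mem_closedBall_iff_norm] at hz
  calc ‖z‖ ≤ ‖(1 : ℂ)‖ + ‖z - 1‖ := norm_le_norm_add_norm_sub' z 1
    _ < 1 + η := by rw [norm_one]; linarith

theorem circleIntegral_pow_succ_smul_inverse_one_sub_smul_eq_zero {𝓐 : Type*} [NormedRing 𝓐]
    [NormedAlgebra ℂ 𝓐] [HasSummableGeomSeries 𝓐] {a q : 𝓐} (hq : IsIdempotentElem q)
    (haq : a * q = q) (hqa : q * a = q) {s : ℝ} (hs0 : 0 < s)
    (hunit : ∀ z ∈ closedBall (1 : ℂ) s, IsUnit (1 - z • a + q)) (n : ℕ) :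
    ∮ z in C(1, s), (z - 1) ^ (n + 1) • Ring.inverse (1 - z • a) = 0 := by
  set W := fun z : ℂ => Ring.inverse (1 - z • a + q)
  have hsplit : EqOn (fun z : ℂ => (z - 1) ^ (n + 1) • Ring.inverse (1 - z • a))
      (fun z => (z - 1) ^ n • ((z - 1) • (W z * (1 - q)) - q)) (sphere 1 s) := by
    intro z hz
    have hz1 : z ≠ 1 := by rintro rfl; simp [hs0.ne] at hz
    have hscalar : (z - 1) * (1 - z)⁻¹ = -1 := by
      rw [← neg_sub 1 z, neg_mul, mul_inv_cancel₀ (sub_ne_zero.mpr hz1.symm)]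
    simp only
    rw [Ring.inverse_one_sub_smul_eq hq haq hqa hz1 (hunit z (sphere_subset_closedBall hz)),
      pow_succ, mul_smul, smul_add, smul_smul, hscalar, neg_one_smul, neg_add_eq_sub]
  have hdiff : ∀ z ∈ closedBall (1 : ℂ) s,
      DifferentiableAt ℂ (fun z => (z - 1) ^ n • ((z - 1) • (W z * (1 - q)) - q)) z := by
    intro z hz
    have hW : DifferentiableAt ℂ W z :=
      (((differentiableAt_const 1).sub (differentiableAt_id.smul_const a)).add_const q).inverse
        (hunit z hz)
    exact ((differentiableAt_id.sub_const 1).pow n).smul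
      (((differentiableAt_id.sub_const 1).smul (hW.mul_const _)).sub_const q)
  rw [circleIntegral.integral_congr hs0.le hsplit]
  exact circleIntegral_eq_zero_of_differentiable_on_off_countable hs0.le countable_empty
    (fun z hz => (hdiff z hz).continuousAt.continuousWithinAt)
    (fun z hz => hdiff z (ball_subset_closedBall hz.1))

section LaurentCoefficients

variable {B : Type*} [NormedAddCommGroup B] [NormedSpace ℂ B] [CompleteSpace B]
  {A : B →L[ℂ] B} {η : ℝ} (hinv : ∀ z : ℂ, ‖z‖ < 1 + η → z ≠ 1 → IsUnit (1 - z • A))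
include hinv

theorem differentiableAt_laurentIntegrand {s : ℝ} (hs : s < η) (n : ℤ) (C : B →L[ℂ] B) {z : ℂ}
    (hz : z ∈ closedBall (1 : ℂ) s \ {1}) :
    DifferentiableAt ℂ (fun w : ℂ => (w - 1) ^ n • (C * Ring.inverse (1 - w • A))) z :=
  differentiableAt_zpow_smul_mul_inverse_one_sub_smul n C A hz.2
    (hinv z (norm_lt_one_add_of_mem_closedBall hs hz.1) hz.2)

theorem circleIntegrable_laurentIntegrand {s : ℝ} (h0 : 0 < s) (hs : s < η) (n : ℤ)
    (C : B →L[ℂ] B) :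
    CircleIntegrable (fun z : ℂ => (z - 1) ^ n • (C * Ring.inverse (1 - z • A))) 1 s := by
  refine ContinuousOn.circleIntegrable h0.le fun z hz => ?_
  have hz1 : z ≠ 1 := by rintro rfl; simp [h0.ne] at hz
  exact (differentiableAt_laurentIntegrand hinv hs n C
    ⟨sphere_subset_closedBall hz, hz1⟩).continuousAt.continuousWithinAt

theorem mul_laurentN {s : ℝ} (h0 : 0 < s) (hs : s < η) (C : B →L[ℂ] B) (j : ℤ) :
    C * laurentN A s j = (-(2 * (Real.pi : ℂ) * Complex.I)⁻¹) •
      ∮ z in C(1, s), (z - 1) ^ (-j - 1) • (C * Ring.inverse (1 - z • A)) := by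
  have hf := circleIntegrable_laurentIntegrand hinv h0 hs (-j - 1) 1
  simp only [one_mul] at hf
  have hcomm := (ContinuousLinearMap.mul ℂ _ C).circleIntegral_comp_comm hf
  simp only [ContinuousLinearMap.mul_apply', mul_smul_comm] at hcomm
  rw [laurentN, mul_smul_comm, ← hcomm]

theorem laurentN_mul {s : ℝ} (h0 : 0 < s) (hs : s < η) (D : B →L[ℂ] B) (j : ℤ) :
    laurentN A s j * D = (-(2 * (Real.pi : ℂ) * Complex.I)⁻¹) •
      ∮ z in C(1, s), (z - 1) ^ (-j - 1) • (Ring.inverse (1 - z • A) * D) := by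
  have hf := circleIntegrable_laurentIntegrand hinv h0 hs (-j - 1) 1
  simp only [one_mul] at hf
  have hcomm := ((ContinuousLinearMap.mul ℂ _).flip D).circleIntegral_comp_comm hf
  simp only [ContinuousLinearMap.flip_apply, ContinuousLinearMap.mul_apply', smul_mul_assoc]
    at hcomm
  rw [laurentN, smul_mul_assoc, ← hcomm]

theorem commute_laurentN {s : ℝ} (h0 : 0 < s) (hs : s < η) (j : ℤ) :
    Commute A (laurentN A s j) := by
  rw [Commute, SemiconjBy, mul_laurentN hinv h0 hs, laurentN_mul hinv h0 hs]
  congr 2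
  funext z
  rw [((Commute.one_right A).sub_right ((Commute.refl A).smul_right z)).ringInverse_right.eq]

theorem laurentN_recurrence {s : ℝ} (h0 : 0 < s) (hs : s < η) (j : ℤ) :
    (1 - A) * laurentN A s j - A * laurentN A s (j - 1) = if j = 0 then -1 else 0 := by
  rw [mul_laurentN hinv h0 hs, mul_laurentN hinv h0 hs, ← smul_sub,
    ← circleIntegral.integral_sub (circleIntegrable_laurentIntegrand hinv h0 hs _ _)
      (circleIntegrable_laurentIntegrand hinv h0 hs _ _)]
  have hpencil : EqOn
      (fun z : ℂ => (z - 1) ^ (-j - 1) • ((1 - A) * Ring.inverse (1 - z • A))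
        - (z - 1) ^ (-(j - 1) - 1) • (A * Ring.inverse (1 - z • A)))
      (fun z : ℂ => (z - 1) ^ (-j - 1) • (1 : B →L[ℂ] B)) (sphere 1 s) := by
    intro z hz
    have hz1 : z ≠ 1 := by rintro rfl; simp [h0.ne] at hz
    have hu := hinv z (norm_lt_one_add_of_mem_closedBall hs (sphere_subset_closedBall hz)) hz1
    have hsplit : (1 - A) - (z - 1) • A = 1 - z • A := by rw [sub_smul, one_smul]; abel
    simp only
    rw [show -(j - 1) - 1 = (-j - 1) + 1 by ring, zpow_add_one₀ (sub_ne_zero.mpr hz1), mul_smul,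
      ← smul_sub, ← smul_mul_assoc, ← sub_mul, hsplit, Ring.mul_inverse_cancel _ hu]
  rw [circleIntegral.integral_congr h0.le hpencil, circleIntegral.integral_smul_const]
  split_ifs with hj
  · subst hj
    have h2πi : ∮ z in C(1, s), (z - 1) ^ (-(0 : ℤ) - 1) = 2 * Real.pi * Complex.I := by
      simpa using circleIntegral.integral_sub_center_inv (1 : ℂ) h0.ne'
    rw [h2πi, smul_smul, neg_mul, inv_mul_cancel₀ two_pi_I_ne_zero, neg_smul, one_smul]
  · rw [circleIntegral.integral_sub_zpow_of_ne (by omega), zero_smul, smul_zero]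

theorem laurentN_eq_of_radius_le {s₁ s₂ : ℝ} (h0 : 0 < s₁) (h₁₂ : s₁ ≤ s₂) (hs₂ : s₂ < η)
    (j : ℤ) :
    laurentN A s₂ j = laurentN A s₁ j := by
  have hdiff : ∀ z ∈ closedBall (1 : ℂ) s₂ \ {1},
      DifferentiableAt ℂ (fun w : ℂ => (w - 1) ^ (-j - 1) • Ring.inverse (1 - w • A)) z :=
    fun z hz => by simpa using differentiableAt_laurentIntegrand hinv hs₂ (-j - 1) 1 hz
  rw [laurentN, laurentN, circleIntegral_eq_of_differentiable_on_annulus_off_countable h0 h₁₂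
    countable_empty (fun z hz => ?_) (fun z hz => ?_)]
  · have hz1 : z ≠ 1 := by rintro rfl; exact hz.2 (mem_ball_self h0)
    exact (hdiff z ⟨hz.1, hz1⟩).continuousAt.continuousWithinAt
  · have hz1 : z ≠ 1 := by rintro rfl; exact hz.1.2 (mem_closedBall_self h0.le)
    exact hdiff z ⟨ball_subset_closedBall hz.1.1, hz1⟩

end LaurentCoefficients

theorem ContinuousLinearMap.exists_isUnit_one_sub_add_of_isCompl {𝕜 E : Type*}
    [NontriviallyNormedField 𝕜] [NormedAddCommGroup E] [NormedSpace 𝕜 E] [CompleteSpace E]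
    {A : E →L[𝕜] E}
    (hcompl : IsCompl (LinearMap.range ((1 - A : E →L[𝕜] E) : E →ₗ[𝕜] E))
      (LinearMap.ker ((1 - A : E →L[𝕜] E) : E →ₗ[𝕜] E)))
    (hclosed : IsClosed (LinearMap.range ((1 - A : E →L[𝕜] E) : E →ₗ[𝕜] E) : Set E)) :
    ∃ Q : E →L[𝕜] E, IsIdempotentElem Q ∧ A * Q = Q ∧ Q * A = Q ∧ IsUnit (1 - A + Q) := by
  set f : E →L[𝕜] E := 1 - A
  have htop := Submodule.IsCompl.isTopCompl_of_isClosed hcompl.symm f.isClosed_ker hclosed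
  set Q := (LinearMap.ker (f : E →ₗ[𝕜] E)).projectionL _ htop
  refine ⟨Q, Submodule.isIdempotentElem_projectionL htop, ?_, ?_, ?_⟩
  · ext x
    have : f (Q x) = 0 := Submodule.projectionL_apply_mem htop x
    exact (sub_eq_zero.mp (by simpa [f] using this)).symm
  · ext x
    have : Q (f x) = 0 := (Submodule.projectionL_apply_eq_zero_iff htop).mpr ⟨x, rfl⟩
    exact (sub_eq_zero.mp (by simpa [f] using this)).symm
  · rw [ContinuousLinearMap.isUnit_iff_bijective]
    exact LinearMap.bijective_add_projection_ker (f : E →ₗ[𝕜] E) hcompl.symm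

section SimplePole

variable {B : Type*} [NormedAddCommGroup B] [NormedSpace ℂ B] [CompleteSpace B]
  {A : B →L[ℂ] B} {η r : ℝ} (hinv : ∀ z : ℂ, ‖z‖ < 1 + η → z ≠ 1 → IsUnit (1 - z • A))
  (hr0 : 0 < r) (hrη : r < η)
include hinv hr0 hrη

theorem commute_toLinearMap_laurentN (j : ℤ) :
    Commute (A : B →ₗ[ℂ] B) (laurentN A r j) :=
  (commute_laurentN hinv hr0 hrη j).map ContinuousLinearMap.toLinearMapRingHom

theorem one_sub_mul_laurentN_zero_sub_mul :
    (1 - (A : B →ₗ[ℂ] B)) * laurentN A r 0 - A * laurentN A r (-1) = -1 := by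
  simpa using congrArg ContinuousLinearMap.toLinearMap (laurentN_recurrence hinv hr0 hrη 0)

theorem one_sub_mul_laurentN_neg_one_eq_zero
    (hi : ∀ k : ℤ, 2 ≤ k → laurentN A r (-k) = 0) : (1 - A) * laurentN A r (-1) = 0 := by
  simpa [hi 2 le_rfl] using laurentN_recurrence hinv hr0 hrη (-1)

theorem laurentN_neg_one_eq_mul (hi : ∀ k : ℤ, 2 ≤ k → laurentN A r (-k) = 0) :
    laurentN A r (-1) = laurentN A r (-1) * A := by
  have hfix := one_sub_mul_laurentN_neg_one_eq_zero hinv hr0 hrη hi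
  rw [sub_mul, one_mul, sub_eq_zero] at hfix
  rw [← (commute_laurentN hinv hr0 hrη (-1)).eq, ← hfix]

theorem range_laurentN_mul_eq_ker (hi : ∀ k : ℤ, 2 ≤ k → laurentN A r (-k) = 0) :
    LinearMap.range ((laurentN A r (-1) * A : B →L[ℂ] B) : B →ₗ[ℂ] B) =
      LinearMap.ker ((1 - A : B →L[ℂ] B) : B →ₗ[ℂ] B) := by
  have hpole := congrArg ContinuousLinearMap.toLinearMap
    (one_sub_mul_laurentN_neg_one_eq_zero hinv hr0 hrη hi)
  simp only [ContinuousLinearMap.toLinearMap_mul, ContinuousLinearMap.toLinearMap_sub,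
    ContinuousLinearMap.toLinearMap_one, ContinuousLinearMap.toLinearMap_zero] at hpole ⊢
  exact range_mul_eq_ker_one_sub (commute_toLinearMap_laurentN hinv hr0 hrη 0)
    (commute_toLinearMap_laurentN hinv hr0 hrη (-1))
    (one_sub_mul_laurentN_zero_sub_mul hinv hr0 hrη) hpole

theorem isIdempotentElem_laurentN_mul
    (hrange : LinearMap.range ((laurentN A r (-1) * A : B →L[ℂ] B) : B →ₗ[ℂ] B) =
      LinearMap.ker ((1 - A : B →L[ℂ] B) : B →ₗ[ℂ] B)) :
    IsIdempotentElem (laurentN A r (-1) * A) := by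
  rw [← ContinuousLinearMap.isIdempotentElem_toLinearMap_iff]
  simp only [ContinuousLinearMap.toLinearMap_mul, ContinuousLinearMap.toLinearMap_sub,
    ContinuousLinearMap.toLinearMap_one] at hrange ⊢
  exact isIdempotentElem_mul_of_range_eq_ker (commute_toLinearMap_laurentN hinv hr0 hrη 0)
    (commute_toLinearMap_laurentN hinv hr0 hrη (-1))
    (one_sub_mul_laurentN_zero_sub_mul hinv hr0 hrη) hrange

theorem ker_laurentN_mul_eq_range
    (hrange : LinearMap.range ((laurentN A r (-1) * A : B →L[ℂ] B) : B →ₗ[ℂ] B) =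
      LinearMap.ker ((1 - A : B →L[ℂ] B) : B →ₗ[ℂ] B)) :
    LinearMap.ker ((laurentN A r (-1) * A : B →L[ℂ] B) : B →ₗ[ℂ] B) =
      LinearMap.range ((1 - A : B →L[ℂ] B) : B →ₗ[ℂ] B) := by
  simp only [ContinuousLinearMap.toLinearMap_mul, ContinuousLinearMap.toLinearMap_sub,
    ContinuousLinearMap.toLinearMap_one] at hrange ⊢
  exact ker_mul_eq_range_one_sub_of_range_eq_ker (commute_toLinearMap_laurentN hinv hr0 hrη (-1))
    (one_sub_mul_laurentN_zero_sub_mul hinv hr0 hrη) hrange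

theorem laurentN_neg_eq_zero_of_isUnit_one_sub_add {Q : B →L[ℂ] B} (hQ : IsIdempotentElem Q)
    (hAQ : A * Q = Q) (hQA : Q * A = Q) (hT : IsUnit (1 - A + Q)) {k : ℤ} (hk : 2 ≤ k) :
    laurentN A r (-k) = 0 := by
  have hnhds : ∀ᶠ z in nhds (1 : ℂ), IsUnit (1 - z • A + Q) :=
    (show Continuous fun z : ℂ => 1 - z • A + Q by fun_prop).continuousAt.eventually_mem
      (Units.isOpen.mem_nhds (by simpa using hT))
  obtain ⟨ε, hε, hball⟩ := nhds_basis_closedBall.eventually_iff.mp hnhds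
  obtain ⟨n, rfl⟩ : ∃ n : ℕ, k = n + 2 := ⟨(k - 2).toNat, by omega⟩
  rw [laurentN_eq_of_radius_le hinv (lt_min hr0 hε) (min_le_left r ε) hrη, laurentN,
    show -(-((n : ℤ) + 2)) - 1 = ((n + 1 : ℕ) : ℤ) by push_cast; ring]
  simp only [zpow_natCast]
  rw [circleIntegral_pow_succ_smul_inverse_one_sub_smul_eq_zero hQ hAQ hQA (lt_min hr0 hε)
    (fun _ hz => hball (closedBall_subset_closedBall (min_le_right r ε) hz)), smul_zero]

theorem laurentN_neg_eq_zero_of_isCompl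
    (hcompl : IsCompl (LinearMap.range ((1 - A : B →L[ℂ] B) : B →ₗ[ℂ] B))
      (LinearMap.ker ((1 - A : B →L[ℂ] B) : B →ₗ[ℂ] B)))
    (hclosed : IsClosed (LinearMap.range ((1 - A : B →L[ℂ] B) : B →ₗ[ℂ] B) : Set B))
    {k : ℤ} (hk : 2 ≤ k) : laurentN A r (-k) = 0 := by
  obtain ⟨Q, hQ, hAQ, hQA, hT⟩ :=
    ContinuousLinearMap.exists_isUnit_one_sub_add_of_isCompl hcompl hclosed
  exact laurentN_neg_eq_zero_of_isUnit_one_sub_add hinv hr0 hrη hQ hAQ hQA hT hk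

end SimplePole

theorem statement9_general
    {B : Type*} [NormedAddCommGroup B] [NormedSpace ℂ B] [CompleteSpace B]
    (A₁ : B →L[ℂ] B) (η : ℝ)
    (hinv : ∀ z : ℂ, ‖z‖ < 1 + η → z ≠ 1 → IsUnit (1 - z • A₁))
    (r : ℝ) (hr0 : 0 < r) (hrη : r < η)
    (P : B →L[ℂ] B) (hP : P = laurentN A₁ r (-1) * A₁) :
    ((∀ k : ℤ, 2 ≤ k → laurentN A₁ r (-k) = 0) ↔
      LinearMap.range (P : B →ₗ[ℂ] B) = LinearMap.ker ((1 - A₁ : B →L[ℂ] B) : B →ₗ[ℂ] B)) ∧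
    ((∀ k : ℤ, 2 ≤ k → laurentN A₁ r (-k) = 0) ↔
      (P * P = P ∧ LinearMap.range (P : B →ₗ[ℂ] B) = LinearMap.ker ((1 - A₁ : B →L[ℂ] B) : B →ₗ[ℂ] B) ∧
        LinearMap.ker (P : B →ₗ[ℂ] B) = LinearMap.range ((1 - A₁ : B →L[ℂ] B) : B →ₗ[ℂ] B))) ∧
    ((∀ k : ℤ, 2 ≤ k → laurentN A₁ r (-k) = 0) ↔
      (IsCompl (LinearMap.range ((1 - A₁ : B →L[ℂ] B) : B →ₗ[ℂ] B)) (LinearMap.ker ((1 - A₁ : B →L[ℂ] B) : B →ₗ[ℂ] B)) ∧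
        IsClosed ((LinearMap.range ((1 - A₁ : B →L[ℂ] B) : B →ₗ[ℂ] B) : Submodule ℂ B) : Set B))) ∧
    ((∀ k : ℤ, 2 ≤ k → laurentN A₁ r (-k) = 0) → laurentN A₁ r (-1) = P) := by
  subst hP
  set K := LinearMap.ker ((1 - A₁ : B →L[ℂ] B) : B →ₗ[ℂ] B)
  set M := LinearMap.range ((1 - A₁ : B →L[ℂ] B) : B →ₗ[ℂ] B)
  set P := laurentN A₁ r (-1) * A₁
  have i_ii := range_laurentN_mul_eq_ker hinv hr0 hrη
  have ii_iii (hii : LinearMap.range (P : B →ₗ[ℂ] B) = K) :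
      P * P = P ∧ LinearMap.range (P : B →ₗ[ℂ] B) = K ∧ LinearMap.ker (P : B →ₗ[ℂ] B) = M :=
    ⟨isIdempotentElem_laurentN_mul hinv hr0 hrη hii, hii,
      ker_laurentN_mul_eq_range hinv hr0 hrη hii⟩
  have iii_iv : P * P = P ∧ LinearMap.range (P : B →ₗ[ℂ] B) = K ∧
      LinearMap.ker (P : B →ₗ[ℂ] B) = M → IsCompl M K ∧ IsClosed (M : Set B) := by
    rintro ⟨hPP, hrange, hker⟩
    rw [← hrange, ← hker]
    exact ⟨(LinearMap.IsIdempotentElem.isCompl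
      (ContinuousLinearMap.IsIdempotentElem.toLinearMap hPP)).symm, P.isClosed_ker⟩
  have iv_i (h : IsCompl M K ∧ IsClosed (M : Set B)) (k : ℤ) (hk : 2 ≤ k) :
      laurentN A₁ r (-k) = 0 :=
    laurentN_neg_eq_zero_of_isCompl hinv hr0 hrη h.1 h.2 hk
  exact ⟨⟨i_ii, fun h => iv_i (iii_iv (ii_iii h))⟩,
    ⟨fun h => ii_iii (i_ii h), fun h => iv_i (iii_iv h)⟩,
    ⟨fun h => iii_iv (ii_iii (i_ii h)), iv_i⟩, laurentN_neg_one_eq_mul hinv hr0 hrη⟩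

/-- with `P := N_{-1} A₁`, under the unit-root assumption the following are
equivalent: (i) `N_{-k} = 0` for all `k ≥ 2` (simple pole at `z = 1`); (ii)
`ran P = ker (I - A₁)`; (iii) `P` is an idempotent with range `ker (I - A₁)` and kernel
`ran (I - A₁)`; (iv) `B = ran (I - A₁) ⊕ ker (I - A₁)` (internal direct sum; in
particular `ran (I - A₁)` is closed). Moreover under these conditions `N_{-1} = P`. -/
theorem statement9
    {B : Type*} [NormedAddCommGroup B] [NormedSpace ℂ B] [CompleteSpace B]
    (A₁ : B →L[ℂ] B) (η : ℝ) (hη : 0 < η)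
    (hinv : ∀ z : ℂ, ‖z‖ < 1 + η → z ≠ 1 → IsUnit (1 - z • A₁))
    (hnot : ¬ IsUnit (1 - A₁))
    (r : ℝ) (hr0 : 0 < r) (hrη : r < η)
    (P : B →L[ℂ] B) (hP : P = laurentN A₁ r (-1) * A₁) :
    ((∀ k : ℤ, 2 ≤ k → laurentN A₁ r (-k) = 0) ↔
      LinearMap.range (P : B →ₗ[ℂ] B) = LinearMap.ker ((1 - A₁ : B →L[ℂ] B) : B →ₗ[ℂ] B)) ∧
    ((∀ k : ℤ, 2 ≤ k → laurentN A₁ r (-k) = 0) ↔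
      (P * P = P ∧ LinearMap.range (P : B →ₗ[ℂ] B) = LinearMap.ker ((1 - A₁ : B →L[ℂ] B) : B →ₗ[ℂ] B) ∧
        LinearMap.ker (P : B →ₗ[ℂ] B) = LinearMap.range ((1 - A₁ : B →L[ℂ] B) : B →ₗ[ℂ] B))) ∧
    ((∀ k : ℤ, 2 ≤ k → laurentN A₁ r (-k) = 0) ↔
      (IsCompl (LinearMap.range ((1 - A₁ : B →L[ℂ] B) : B →ₗ[ℂ] B)) (LinearMap.ker ((1 - A₁ : B →L[ℂ] B) : B →ₗ[ℂ] B)) ∧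
        IsClosed ((LinearMap.range ((1 - A₁ : B →L[ℂ] B) : B →ₗ[ℂ] B) : Submodule ℂ B) : Set B))) ∧
    ((∀ k : ℤ, 2 ≤ k → laurentN A₁ r (-k) = 0) → laurentN A₁ r (-1) = P) :=
  statement9_general A₁ η hinv r hr0 hrη P hP
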